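/- Let k ≥ 1 and let s be a barred state having a k-fuse. A finite sequence (j_1,…,j_m) of positive integers with j_1 ≤ k is playable from s if and only if it is weakly decreasing and, writing its distinct values in decreasing order as v_1 > v_2 > ⋯ > v_p with respective multiplicities r_1,…,r_p and setting v_0 = k+1, one has r_q ≤ v_{q−1} − v_q for every 1 ≤ q ≤ p. -/

import Mathlib

/-!
Call a state an `(n, c)`-state if `μ_1, …, μ_n` is an `n`-fuse, `μ_{n+1}, …, μ_{n+c}` a
`c`-fuse, and the barred positions are `1, …, n` together with `n + 1` when `c > 0`. In an
`(n, c)`-state, playing `j ≤ n` merges `μ_j` into `μ_{j-1}`, which becomes `≥ 3` since no two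
adjacent entries are `1`, and the bar condition `μ_j + ⋯ + μ_i < 3` holds only for `i = j`, and
only if `j < n`: we reach a `(j - 1, n - j)`-state. Playing `n + 1` (if `c > 0`) reaches an
`(n, c - 1)`-state in the same way. So playability from a `k`-fuse is the abstract game on pairs
`(n, c)` started at `(k, 0)`. Its plays are weakly decreasing, and a run of a value `v` following
a run of `v' > v` (or `v' = k + 1`) may be continued `v' - v - 1` times after its first entry,
which is the multiplicity bound of the statement.
-/

/-- A barred state: a sequence `μ` of natural numbers indexed by the positive
integers (the value at `0` is irrelevant) together with a set `S` of barred
positions, all positive and with `μ_j ≠ 0` for `j ∈ S`. -/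
structure BarredState where
  mu : ℕ → ℕ
  bars : Set ℕ
  bars_pos : ∀ j ∈ bars, 1 ≤ j
  bars_ne : ∀ j ∈ bars, mu j ≠ 0

/-- The sequence obtained from `μ` by the move `R_j`:
`μ'_i = μ_i` for `i < j-1`, `μ'_{j-1} = μ_{j-1} + μ_j`, and `μ'_i = μ_{i+1}` for `i ≥ j`. -/
def moveMu (mu : ℕ → ℕ) (j : ℕ) : ℕ → ℕ := fun i =>
  if i < j - 1 then mu i
  else if i = j - 1 then mu (j - 1) + mu j
  else mu (i + 1)

/-- The move `R_j` on barred states: the new barred set is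
`{i : 1 ≤ i ≤ j-1, μ'_i ≠ 0} ∪ {i ≥ j : μ'_i ≠ 0 and μ_j + ⋯ + μ_i < 3}`. -/
def BarredState.move (s : BarredState) (j : ℕ) : BarredState where
  mu := moveMu s.mu j
  bars :=
    {i | 1 ≤ i ∧ i ≤ j - 1 ∧ moveMu s.mu j i ≠ 0} ∪
    {i | 1 ≤ i ∧ j ≤ i ∧ moveMu s.mu j i ≠ 0 ∧ (∑ t ∈ Finset.Icc j i, s.mu t) < 3}
  bars_pos := by
    rintro i (⟨h, -, -⟩ | ⟨h, -, -, -⟩) <;> exact h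
  bars_ne := by
    rintro i (⟨-, -, h⟩ | ⟨-, -, h, -⟩) <;> exact h

/-- A finite sequence `(j_1, …, j_m)` is playable from `s` if `j_1` is barred in `s`
and `(j_2, …, j_m)` is playable from `R_{j_1}(s)`. -/
def PlayableSeq : BarredState → List ℕ → Prop
  | _, [] => True
  | s, j :: js => j ∈ s.bars ∧ PlayableSeq (s.move j) js

/-- The state obtained by playing a sequence of moves. -/
def playAll : BarredState → List ℕ → BarredState
  | s, [] => s
  | s, j :: js => playAll (s.move j) js

/-- `(f_1, …, f_k)` is a `k`-fuse prefix: `f_i ∈ {1,2}` for `1 ≤ i ≤ k-1`, `f_k ≥ 3`,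
and no two consecutive entries equal `1`. -/
def IsFusePrefix (k : ℕ) (f : ℕ → ℕ) : Prop :=
  (∀ i, 1 ≤ i → i ≤ k - 1 → f i = 1 ∨ f i = 2) ∧
  3 ≤ f k ∧
  (∀ i, 1 ≤ i → i ≤ k - 1 → ¬(f i = 1 ∧ f (i + 1) = 1))

/-- A barred state has a `k`-fuse if `(μ_1, …, μ_k)` is a `k`-fuse prefix and
positions `1, …, k` are all barred. -/
def HasFuse (k : ℕ) (s : BarredState) : Prop :=
  IsFusePrefix k s.mu ∧ ∀ i, 1 ≤ i → i ≤ k → i ∈ s.bars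

open List

lemma moveMu_of_lt {f : ℕ → ℕ} {j i : ℕ} (h : i < j - 1) : moveMu f j i = f i := by
  simp [moveMu, h]

lemma moveMu_sub_one (f : ℕ → ℕ) (j : ℕ) : moveMu f j (j - 1) = f (j - 1) + f j := by
  simp [moveMu]

lemma moveMu_of_le {f : ℕ → ℕ} {j i : ℕ} (hj : 1 ≤ j) (h : j ≤ i) :
    moveMu f j i = f (i + 1) := by
  simp [moveMu, show ¬ i < j - 1 by omega, show i ≠ j - 1 by omega]

@[simp] lemma BarredState.move_mu (s : BarredState) (j : ℕ) :
    (s.move j).mu = moveMu s.mu j := rfl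

/-- `f (a + 1), …, f (a + c)` is a `c`-fuse prefix; "no two consecutive `1`s" is phrased as
`3 ≤ f i + f (i + 1)`, which also covers the last pair. -/
def IsFuseOn (f : ℕ → ℕ) (a c : ℕ) : Prop :=
  (∀ i, a < i → i < a + c → (f i = 1 ∨ f i = 2) ∧ 3 ≤ f i + f (i + 1)) ∧
    (0 < c → 3 ≤ f (a + c))

namespace IsFuseOn

variable {f : ℕ → ℕ} {a c : ℕ}

lemma ne_zero (h : IsFuseOn f a c) {i : ℕ} (hai : a < i) (hic : i ≤ a + c) : f i ≠ 0 := by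
  rcases hic.lt_or_eq with hic | rfl
  · rcases (h.1 i hai hic).1 with h1 | h1 <;> omega
  · have := h.2 (by omega); omega

lemma suffix (h : IsFuseOn f a c) {b : ℕ} (hab : a ≤ b) (hb : b ≤ a + c) :
    IsFuseOn f b (a + c - b) :=
  ⟨fun i hbi hi => h.1 i (by omega) (by omega), fun hc => by
    simpa [show b + (a + c - b) = a + c by omega] using h.2 (by omega)⟩

lemma moveMu_shift {j : ℕ} (h : IsFuseOn f j c) (hj : 1 ≤ j) :
    IsFuseOn (moveMu f j) (j - 1) c := by
  refine ⟨fun i hi hic => ?_, fun hc => ?_⟩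
  · rw [moveMu_of_le hj (by omega), moveMu_of_le hj (by omega)]
    exact h.1 (i + 1) (by omega) (by omega)
  · rw [moveMu_of_le hj (by omega), show j - 1 + c + 1 = j + c by omega]
    exact h.2 hc

lemma moveMu_prefix {n j : ℕ} (h : IsFuseOn f 0 n) (hj : 1 ≤ j) (hjn : j ≤ n + 1) :
    IsFuseOn (moveMu f j) 0 (j - 1) := by
  have hpair : 0 < j - 1 → 3 ≤ f (j - 1) + f j := fun hj1 => by
    rcases Nat.lt_or_ge (j - 1) n with hjn' | hjn'
    · simpa [show j - 1 + 1 = j by omega] using (h.1 (j - 1) hj1 (by omega)).2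
    · obtain rfl : n = j - 1 := by omega
      have := h.2 hj1
      rw [zero_add] at this
      omega
  refine ⟨fun i hi hij => ?_, fun hj1 => ?_⟩
  · obtain ⟨hval, hsum⟩ := h.1 i hi (by omega)
    rw [moveMu_of_lt (by omega)]
    refine ⟨hval, ?_⟩
    rcases Nat.lt_or_ge (i + 1) (j - 1) with hij' | hij'
    · rwa [moveMu_of_lt hij']
    · obtain hij' : i + 1 = j - 1 := by omega
      rw [hij'] at hsum
      rw [hij', moveMu_sub_one]
      omega
  · rw [zero_add, moveMu_sub_one]
    exact hpair hj1

end IsFuseOn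

lemma IsFusePrefix.isFuseOn {k : ℕ} {f : ℕ → ℕ} (h : IsFusePrefix k f) :
    IsFuseOn f 0 k := by
  obtain ⟨hval, htop, hnot11⟩ := h
  refine ⟨fun i hi hik => ⟨hval i hi (by omega), ?_⟩, fun _ => by simpa using htop⟩
  rcases Nat.lt_or_ge (i + 1) k with hik' | hik'
  · have := hnot11 i hi (by omega)
    rcases hval i hi (by omega) with h1 | h1 <;>
      rcases hval (i + 1) (by omega) (by omega) with h2 | h2 <;> omega
  · obtain rfl : k = i + 1 := by omega
    omega

lemma add_le_sum_Icc (f : ℕ → ℕ) {j i : ℕ} (h : j < i) :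
    f j + f (j + 1) ≤ ∑ t ∈ Finset.Icc j i, f t := by
  rw [← Finset.sum_pair (f := f) (by omega : j ≠ j + 1)]
  exact Finset.sum_le_sum_of_subset fun x hx => by simp at hx ⊢; omega

lemma BarredState.move_bars_eq {s : BarredState} {j c : ℕ} (hj : 1 ≤ j)
    (hlow : ∀ i, 1 ≤ i → i < j → s.mu i ≠ 0) (h : IsFuseOn s.mu (j - 1) c) (hc : 0 < c) :
    (s.move j).bars = Set.Icc 1 (if c = 1 then j - 1 else j) := by
  have hlow' : ∀ i, 1 ≤ i → i ≤ j - 1 → moveMu s.mu j i ≠ 0 := fun i hi hij => by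
    rcases hij.lt_or_eq with hij | rfl
    · rw [moveMu_of_lt hij]; exact hlow i hi (by omega)
    · rw [moveMu_sub_one]; have := hlow (j - 1) hi (by omega); omega
  ext i
  simp only [BarredState.move, Set.mem_union, Set.mem_ofPred_eq, Set.mem_Icc]
  split_ifs with hc1
  · subst hc1
    have h3 : 3 ≤ s.mu j := by simpa [show j - 1 + 1 = j by omega] using h.2 one_pos
    constructor
    · rintro (⟨h1, h2, -⟩ | ⟨-, h2, -, h4⟩)
      · exact ⟨h1, h2⟩
      · have := Finset.single_le_sum (fun t _ => Nat.zero_le (s.mu t))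
          (Finset.mem_Icc.mpr ⟨le_rfl, h2⟩)
        omega
    · rintro ⟨h1, h2⟩
      exact Or.inl ⟨h1, h2, hlow' i h1 h2⟩
  · obtain ⟨hval, hpair⟩ := h.1 j (by omega) (by omega)
    constructor
    · rintro (⟨h1, h2, -⟩ | ⟨h1, h2, -, h4⟩)
      · exact ⟨h1, by omega⟩
      · refine ⟨h1, not_lt.mp fun hji => ?_⟩
        have := add_le_sum_Icc s.mu hji; omega
    · rintro ⟨h1, h2⟩
      rcases h2.lt_or_eq with h2 | rfl
      · exact Or.inl ⟨h1, by omega, hlow' i h1 (by omega)⟩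
      · refine Or.inr ⟨h1, le_rfl, ?_, ?_⟩
        · rw [moveMu_of_le hj le_rfl]; omega
        · rw [Finset.Icc_self, Finset.sum_singleton]; omega

def IsFuseState (s : BarredState) (n c : ℕ) : Prop :=
  IsFuseOn s.mu 0 n ∧ IsFuseOn s.mu n c ∧ s.bars = Set.Icc 1 (if c = 0 then n else n + 1)

lemma IsFuseOn.isFuseState_move {s : BarredState} {n j : ℕ} (h : IsFuseOn s.mu 0 n)
    (hj : 1 ≤ j) (hjn : j ≤ n) : IsFuseState (s.move j) (j - 1) (n - j) := by
  refine ⟨h.moveMu_prefix hj (by omega), ?_, ?_⟩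
  · simpa using (h.suffix (Nat.zero_le j) (by omega)).moveMu_shift hj
  · rw [BarredState.move_bars_eq hj (fun i hi hij => h.ne_zero hi (by omega))
      (h.suffix (Nat.zero_le (j - 1)) (by omega)) (by omega)]
    congr 1
    split_ifs <;> omega

lemma IsFuseState.move_succ {s : BarredState} {n c : ℕ} (h : IsFuseState s n c) (hc : 0 < c) :
    IsFuseState (s.move (n + 1)) n (c - 1) := by
  obtain ⟨hlow, hhigh, -⟩ := h
  refine ⟨by simpa using hlow.moveMu_prefix (j := n + 1) (by omega) le_rfl, ?_, ?_⟩
  · simpa [show n + c - (n + 1) = c - 1 by omega] using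
      (hhigh.suffix (b := n + 1) (by omega) (by omega)).moveMu_shift (by omega)
  · rw [BarredState.move_bars_eq (by omega) (fun i hi hin => hlow.ne_zero hi (by omega))
      (by simpa using hhigh) hc]
    congr 1
    split_ifs <;> omega

def FusePlayable : ℕ → ℕ → List ℕ → Prop
  | _, _, [] => True
  | n, c, j :: js =>
    (1 ≤ j ∧ j ≤ n ∧ FusePlayable (j - 1) (n - j) js) ∨
      (j = n + 1 ∧ 0 < c ∧ FusePlayable n (c - 1) js)

lemma IsFuseState.mem_bars_iff {s : BarredState} {n c j : ℕ} (h : IsFuseState s n c) :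
    j ∈ s.bars ↔ (1 ≤ j ∧ j ≤ n) ∨ (j = n + 1 ∧ 0 < c) := by
  rw [h.2.2, Set.mem_Icc]
  split_ifs <;> omega

lemma IsFuseState.playableSeq_iff {s : BarredState} {n c : ℕ} {js : List ℕ}
    (h : IsFuseState s n c) : PlayableSeq s js ↔ FusePlayable n c js := by
  induction js generalizing s n c with
  | nil => simp [PlayableSeq, FusePlayable]
  | cons j t ih =>
    simp only [PlayableSeq, FusePlayable, h.mem_bars_iff, or_and_right, and_assoc]
    refine or_congr ?_ ?_
    · exact and_congr_right fun hj => and_congr_right fun hjn => ih (h.1.isFuseState_move hj hjn)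
    · exact and_congr_right fun hj => and_congr_right fun hc => ih (hj ▸ h.move_succ hc)

section Chain

variable {α : Type*}

lemma List.IsChain.le_of_mem_tail [Preorder α] {j x : α} {t : List α}
    (h : IsChain (fun a b => b ≤ a) (j :: t)) (hx : x ∈ t) : x ≤ j :=
  (pairwise_cons.mp (isChain_iff_pairwise.mp h)).1 x hx

lemma List.IsChain.eq_of_mem_tail [PartialOrder α] {j a : α} {t : List α}
    (h : IsChain (fun a b => b ≤ a) (j :: a :: t)) (hj : j ∈ a :: t) : a = j := by
  refine le_antisymm (h.le_of_mem_tail mem_cons_self) ?_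
  rcases mem_cons.mp hj with rfl | hjt
  exacts [le_rfl, (isChain_cons_cons.mp h).2.le_of_mem_tail hjt]

lemma List.IsChain.dedup_cons [PartialOrder α] [DecidableEq α] {j : α} {t : List α}
    (h : IsChain (fun a b => b ≤ a) (j :: t)) : ∃ d, (j :: t).dedup = j :: d ∧ j ∉ d := by
  induction t with
  | nil => exact ⟨[], rfl, not_mem_nil⟩
  | cons a t ih =>
    by_cases hj : j ∈ a :: t
    · obtain rfl := h.eq_of_mem_tail hj
      rw [dedup_cons_of_mem hj]
      exact ih (isChain_cons_cons.mp h).2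
    · exact ⟨(a :: t).dedup, dedup_cons_of_notMem hj, by rwa [mem_dedup]⟩

end Chain

/-- The multiplicity bound of the statement with `v_0 = b`: `(b :: d).zip d` lists the pairs
`(v_{q-1}, v_q)` of the distinct values `d = v_1, v_2, …`. -/
def CountBound (b : ℕ) (js : List ℕ) : Prop :=
  ∀ p ∈ (b :: js.dedup).zip js.dedup, js.count p.2 ≤ p.1 - p.2

lemma countBound_iff_forall_getElem (b : ℕ) (js : List ℕ) :
    CountBound b js ↔ ∀ (q : ℕ) (hq : q < js.dedup.length),
      js.count (js.dedup[q]'hq) ≤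
        ((b :: js.dedup)[q]'(Nat.lt_succ_of_lt hq)) - js.dedup[q]'hq := by
  rw [CountBound, forall_mem_iff_forall_getElem]
  simp [getElem_zip]

lemma countBound_cons_of_notMem {b j : ℕ} {t : List ℕ} (hj : j ∉ t) :
    CountBound b (j :: t) ↔ j < b ∧ CountBound j t := by
  have hcount : ∀ p ∈ (j :: t.dedup).zip t.dedup, (j :: t).count p.2 = t.count p.2 :=
    fun p hp => count_cons_of_ne fun h => hj (by rw [h]; exact mem_dedup.mp (of_mem_zip hp).2)
  simp only [CountBound, dedup_cons_of_notMem hj, zip_cons_cons, forall_mem_cons,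
    count_cons_self, count_eq_zero_of_not_mem hj]
  rw [forall₂_congr fun p hp => by rw [hcount p hp]]
  exact and_congr_left fun _ => by omega

lemma countBound_cons_cons_self {b j : ℕ} {t : List ℕ}
    (h : IsChain (fun a b => b ≤ a) (j :: t)) :
    CountBound b (j :: j :: t) ↔ j < b ∧ CountBound (b - 1) (j :: t) := by
  obtain ⟨d, hd, hjd⟩ := h.dedup_cons
  have hcount : ∀ p ∈ (j :: d).zip d, (j :: j :: t).count p.2 = (j :: t).count p.2 :=
    fun p hp => count_cons_of_ne fun h => hjd (by rw [h]; exact (of_mem_zip hp).2)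
  simp only [CountBound, dedup_cons_of_mem mem_cons_self, hd, zip_cons_cons, forall_mem_cons]
  rw [forall₂_congr fun p hp => by rw [hcount p hp], count_cons_self (l := j :: t)]
  have : 0 < (j :: t).count j := count_pos_iff.mpr mem_cons_self
  constructor
  · rintro ⟨hj, hrest⟩
    exact ⟨by omega, by omega, hrest⟩
  · rintro ⟨-, hj, hrest⟩
    exact ⟨by omega, hrest⟩

lemma countBound_cons {b j : ℕ} {t : List ℕ} (h : IsChain (fun a b => b ≤ a) (j :: t)) :
    CountBound b (j :: t) ↔ j < b ∧ CountBound (if t.head? = some j then b - 1 else j) t := by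
  by_cases hj : j ∈ t
  · obtain ⟨a, t, rfl⟩ := exists_cons_of_ne_nil (ne_nil_of_mem hj)
    obtain rfl := h.eq_of_mem_tail hj
    rw [head?_cons, if_pos rfl]
    exact countBound_cons_cons_self (isChain_cons_cons.mp h).2
  · rw [if_neg fun h => hj (mem_of_head? h)]
    exact countBound_cons_of_notMem hj

lemma FusePlayable.head_le {n c : ℕ} {js : List ℕ} (h : FusePlayable n c js) :
    ∀ j ∈ js.head?, j ≤ n + 1 := by
  cases js with
  | nil => simp
  | cons j js =>
    rintro _ ⟨⟩
    rcases h with ⟨-, hj, -⟩ | ⟨hj, -⟩ <;> omega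

lemma fusePlayable_iff {n c : ℕ} {js : List ℕ} (hpos : ∀ j ∈ js, 1 ≤ j) :
    FusePlayable n c js ↔ IsChain (fun a b => b ≤ a) js ∧
      CountBound (if js.head? = some (n + 1) then n + 1 + c else n + 1) js := by
  induction js generalizing n c with
  | nil => simp [FusePlayable, CountBound]
  | cons j t ih =>
    have ih' := fun n c => @ih n c fun x hx => hpos x (mem_cons_of_mem j hx)
    obtain ⟨m, rfl⟩ : ∃ m, j = m + 1 := ⟨j - 1, by have := hpos j mem_cons_self; omega⟩
    have head_lt_of_chain {b : ℕ} :
        IsChain (fun a b => b ≤ a) ((m + 1) :: t) ∧ CountBound b ((m + 1) :: t) → m + 1 < b :=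
      fun ⟨hchain, hb⟩ => ((countBound_cons hchain).mp hb).1
    have cons_iff_of_cap (c' b : ℕ) (hb : m + 1 < b)
        (hcap : (if t.head? = some (m + 1) then m + 1 + c' else m + 1) =
          if t.head? = some (m + 1) then b - 1 else m + 1) :
        FusePlayable m c' t ↔
          IsChain (fun a b => b ≤ a) ((m + 1) :: t) ∧ CountBound b ((m + 1) :: t) := by
      constructor
      · intro ht
        obtain ⟨htc, htb⟩ := (ih' m c').mp ht
        have hchain := isChain_cons.mpr ⟨ht.head_le, htc⟩
        exact ⟨hchain, (countBound_cons hchain).mpr ⟨hb, hcap ▸ htb⟩⟩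
      · rintro ⟨hchain, htb⟩
        exact (ih' m c').mpr
          ⟨(isChain_cons.mp hchain).2, hcap ▸ ((countBound_cons hchain).mp htb).2⟩
    simp only [FusePlayable, head?_cons, Option.some.injEq, Nat.add_sub_cancel,
      Nat.add_right_cancel_iff]
    rcases lt_trichotomy m n with hmn | rfl | hmn
    · rw [if_neg hmn.ne, cons_iff_of_cap (n - (m + 1)) (n + 1) (by omega) (by split_ifs <;> omega)]
      simp [show m + 1 ≤ n by omega, hmn.ne]
    · rcases Nat.eq_zero_or_pos c with rfl | hc
      · simpa using fun h => (head_lt_of_chain h).ne rfl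
      · rw [if_pos rfl,
          ← cons_iff_of_cap (c - 1) (m + 1 + c) (by omega) (by split_ifs <;> omega)]
        simp [hc]
    · rw [if_neg hmn.ne']
      simp only [show ¬ m + 1 ≤ n by omega, hmn.ne', false_and, and_false, or_false, false_iff]
      exact fun h => absurd (head_lt_of_chain (b := n + 1) h) (by omega)

/-- Characterization of the playable sequences from a state with a `k`-fuse whose
first entry is at most `k`: they are exactly the weakly decreasing sequences such
that, writing the distinct values in decreasing order as `v_1 > ⋯ > v_p` (that is,
`js.dedup`) with multiplicities `r_1, …, r_p` and setting `v_0 = k+1`, one has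
`r_q ≤ v_{q-1} - v_q` for all `q`. -/
theorem stmt13 (k : ℕ) (s : BarredState) (hs : HasFuse k s)
    (js : List ℕ) (hpos : ∀ j ∈ js, 1 ≤ j) (hhead : ∀ a ∈ js.head?, a ≤ k) :
    PlayableSeq s js ↔
      (List.Chain' (fun a b => b ≤ a) js ∧
        ∀ (q : ℕ) (hq : q < js.dedup.length),
          js.count (js.dedup[q]'hq) ≤
            (((k + 1) :: js.dedup)[q]'(by simp only [List.length_cons]; omega)) -
              js.dedup[q]'hq) := by
  have hplay : PlayableSeq s js ↔ FusePlayable k 0 js := by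
    cases js with
    | nil => simp [PlayableSeq, FusePlayable]
    | cons j t =>
      have hj : 1 ≤ j := hpos j mem_cons_self
      have hjk : j ≤ k := hhead j rfl
      rw [PlayableSeq, (hs.1.isFuseOn.isFuseState_move hj hjk).playableSeq_iff]
      simp [FusePlayable, hs.2 j hj hjk, hj, hjk]
  rw [hplay, fusePlayable_iff hpos, add_zero, ite_self, countBound_iff_forall_getElem]
  rfl
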